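/- The partial subtraction ∸ : {(x,y) ∈ Γ × Γ | y ≤ x} → Γ defined by r° ∸ s° = (r−s)°, r⁻ ∸ s° = (r−s)⁻, and r* ∸ s⁻ = (r−s)° if r−s ∈ ℚ and (r−s)⁻ otherwise (for * ∈ {°,⁻}), is monotone: if y ≤ x, x ≤ x', and y' ≤ y (with y' ≤ x'), then x ∸ y ≤ x' ∸ y'. -/

import Mathlib

open scoped Classical

/-- The carrier of the "doubled unit interval" `Γ`: pairs `(r, b)` ordered
lexicographically, where `b = true` represents an exact value `r°`
(which must be rational) and `b = false` represents an approximation `r⁻`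
(which must satisfy `r > 0`). -/
def GammaCarrier : Set (Lex (ℝ × Bool)) :=
  {p | 0 ≤ (ofLex p).1 ∧ (ofLex p).1 ≤ 1 ∧
    ((ofLex p).2 = true → ∃ q : ℚ, (q : ℝ) = (ofLex p).1) ∧
    ((ofLex p).2 = false → 0 < (ofLex p).1)}

/-- The doubled unit interval `Γ`, with the (total) order inherited from the
lexicographic product: `r* < s*` iff `r < s`, and `q⁻ < q°` immediately. -/
abbrev Gamma : Type := {p : Lex (ℝ × Bool) // p ∈ GammaCarrier}

theorem mem_gammaCarrier {a : ℝ} {b : Bool} (h1 : 0 ≤ a) (h2 : a ≤ 1)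
    (h3 : b = true → ∃ q : ℚ, (q : ℝ) = a) (h4 : b = false → 0 < a) :
    toLex (a, b) ∈ GammaCarrier := ⟨h1, h2, h3, h4⟩

/-- The underlying real number of an element of `Γ` (the map `γ`). -/
def γmap (x : Gamma) : ℝ := (ofLex x.1).1

/-- An element of `Γ` is exact iff it is of `°`-type. -/
def gexact (x : Gamma) : Prop := (ofLex x.1).2 = true

theorem gmem (x : Gamma) : 0 ≤ (ofLex x.1).1 ∧ (ofLex x.1).1 ≤ 1 ∧
    ((ofLex x.1).2 = true → ∃ q : ℚ, (q : ℝ) = (ofLex x.1).1) ∧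
    ((ofLex x.1).2 = false → 0 < (ofLex x.1).1) := x.2

/-- Smart constructor for `Γ`: clamps `r` into `[0,1]`, and produces the exact
value `r°` if `e = true` and `r` is rational (or `r = 0`), and `r⁻` otherwise. -/
noncomputable def mk' (r : ℝ) (e : Bool) : Gamma :=
  if h : (e = true ∧ ∃ q : ℚ, (q : ℝ) = max 0 (min 1 r)) ∨ max 0 (min 1 r) = 0 then
    ⟨toLex (max 0 (min 1 r), true),
      mem_gammaCarrier (le_max_left 0 _) (max_le zero_le_one (min_le_left 1 r))
        (fun _ => h.elim (fun h' => h'.2) (fun h0 => ⟨0, by rw [h0]; norm_num⟩))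
        (fun hc => absurd hc (by simp))⟩
  else
    ⟨toLex (max 0 (min 1 r), false),
      mem_gammaCarrier (le_max_left 0 _) (max_le zero_le_one (min_le_left 1 r))
        (fun hc => absurd hc (by simp))
        (fun _ => lt_of_le_of_ne (le_max_left 0 _) (fun h0 => h (Or.inr h0.symm)))⟩

/-- `0°`, the bottom element of `Γ`. -/
noncomputable def gzero : Gamma := mk' 0 true
/-- `1°`, the top element of `Γ`. -/
noncomputable def gone : Gamma := mk' 1 true
/-- The section `ι° : [0,1] → Γ`, `r ↦ r°` for rational `r` and `r ↦ r⁻` otherwise. -/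
noncomputable def icircR (r : ℝ) : Gamma := mk' r true
/-- The section `ι⁻ : [0,1] → Γ`, `0 ↦ 0°` and `r ↦ r⁻` for `r > 0`. -/
noncomputable def iminusR (r : ℝ) : Gamma := mk' r false
/-- The exact value `q°` of a rational `q ∈ [0,1]`. -/
noncomputable def gq (q : ℚ) : Gamma := mk' (q : ℝ) true
/-- `ι°` as a map on the unit interval. -/
noncomputable def icirc (r : Set.Icc (0:ℝ) 1) : Gamma := icircR r.1
/-- `ι⁻` as a map on the unit interval. -/
noncomputable def iminusI (r : Set.Icc (0:ℝ) 1) : Gamma := iminusR r.1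
/-- `γ : Γ → [0,1]` as a map into the unit interval. -/
noncomputable def gmapI (x : Gamma) : Set.Icc (0:ℝ) 1 := ⟨γmap x, (gmem x).1, (gmem x).2.1⟩

/-- The partial subtraction `∸` on `Γ` (meaningful when `y ≤ x`):
`r° ∸ s° = (r−s)°`, `r⁻ ∸ s° = (r−s)⁻`, and `r* ∸ s⁻ = (r−s)°` if `r−s ∈ ℚ`,
`(r−s)⁻` otherwise. -/
noncomputable def gsub (x y : Gamma) : Gamma :=
  mk' (γmap x - γmap y)
    (if (gexact x ∧ gexact y) ∨ (¬ gexact y ∧ ∃ q : ℚ, (q : ℝ) = γmap x - γmap y)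
      then true else false)

/-- The second partial subtraction `∸̃` on `Γ` (meaningful when `y ≤ x`):
`x ∸̃ x = 0°` and, for `y < x`, `r° ∸̃ s° = r⁻ ∸̃ s⁻ = r⁻ ∸̃ s° = (r−s)⁻` and
`r° ∸̃ s⁻ = (r−s)°` if `r−s ∈ ℚ`, `(r−s)⁻` otherwise. -/
noncomputable def gsubt (x y : Gamma) : Gamma :=
  mk' (γmap x - γmap y)
    (if gexact x ∧ ¬ gexact y ∧ ∃ q : ℚ, (q : ℝ) = γmap x - γmap y then true else false)

/-- The partial addition `+` on `Γ` (meaningful when `x ≤ 1° ∸ y`):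
`r° + s° = (r+s)°` and any sum involving a `⁻`-argument is of `⁻`-type. -/
noncomputable def gadd (x y : Gamma) : Gamma :=
  mk' (γmap x + γmap y) (if gexact x ∧ gexact y then true else false)

/-- A `Γ`-valued (finitely additive, probability) measure on a bounded lattice. -/
def IsGMeasure {D : Type*} [Lattice D] [BoundedOrder D] (μ : D → Gamma) : Prop :=
  Monotone μ ∧ μ ⊥ = gzero ∧ μ ⊤ = gone ∧
  ∀ a b : D, gsubt (μ a) (μ (a ⊓ b)) ≤ gsub (μ (a ⊔ b)) (μ b) ∧
    gsubt (μ (a ⊔ b)) (μ b) ≤ gsub (μ a) (μ (a ⊓ b))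

/-!
The underlying reals satisfy `γ x - γ y ≤ γ x' - γ y'`, which settles the strict case. If
equality holds, then `γ x = γ x'` and `γ y = γ y'`, so `x ≤ x'` and `y' ≤ y` can only make `x`
more exact and `y` less exact in passing to `x', y'`; either change keeps an exact difference
exact, the rationality of `γ x - γ y` coming from that of exact `x` and `y` when `y'` is not exact.
-/

theorem gamma_le_iff (a b : Gamma) :
    a ≤ b ↔ γmap a < γmap b ∨ (γmap a = γmap b ∧ (gexact a → gexact b)) := by
  obtain ⟨pa, ha⟩ := a; obtain ⟨pb, hb⟩ := b
  exact (Prod.Lex.le_iff (x := pa) (y := pb)).trans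
    (by simp [γmap, gexact, Bool.le_iff_imp])

theorem γmap_nonneg (a : Gamma) : 0 ≤ γmap a := (gmem a).1

theorem γmap_le_one (a : Gamma) : γmap a ≤ 1 := (gmem a).2.1

theorem γmap_mono : Monotone γmap := fun a b h => by
  rcases (gamma_le_iff a b).1 h with h | h
  exacts [h.le, h.1.le]

theorem gexact_of_le_of_γmap_eq {a b : Gamma} (h : a ≤ b) (heq : γmap a = γmap b)
    (ha : gexact a) : gexact b := by
  rcases (gamma_le_iff a b).1 h with h | h
  exacts [absurd heq h.ne, h.2 ha]

theorem exists_rat_eq_γmap_of_gexact {a : Gamma} (ha : gexact a) :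
    ∃ q : ℚ, (q : ℝ) = γmap a :=
  (gmem a).2.2.1 ha

theorem γmap_mk' (r : ℝ) (e : Bool) : γmap (mk' r e) = max 0 (min 1 r) := by
  unfold mk'; split <;> rfl

theorem gexact_mk' (r : ℝ) (e : Bool) : gexact (mk' r e) ↔
    ((e = true ∧ ∃ q : ℚ, (q : ℝ) = max 0 (min 1 r)) ∨ max 0 (min 1 r) = 0) := by
  unfold mk'; split
  · exact iff_of_true rfl ‹_›
  · exact iff_of_false (by simp [gexact]) ‹_›

theorem mk'_le_mk' {r s : ℝ} {e e' : Bool} (hr : 0 ≤ r) (hs : s ≤ 1) (hrs : r ≤ s)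
    (he : r = s → e = true → e' = true) : mk' r e ≤ mk' s e' := by
  have hclamp : ∀ t : ℝ, 0 ≤ t → t ≤ 1 → max 0 (min 1 t) = t := fun t h0 h1 => by
    rw [min_eq_right h1, max_eq_right h0]
  rw [gamma_le_iff, γmap_mk', γmap_mk', gexact_mk', gexact_mk',
    hclamp r hr (hrs.trans hs), hclamp s (hr.trans hrs) hs]
  rcases hrs.lt_or_eq with hlt | rfl
  · exact Or.inl hlt
  · exact Or.inr ⟨rfl, Or.imp_left fun ⟨hee, hq⟩ => ⟨he rfl hee, hq⟩⟩

theorem gsub_flag_imp {x y x' y' : Gamma} (hx : gexact x → gexact x')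
    (hy : gexact y' → gexact y) (heq : γmap x - γmap y = γmap x' - γmap y') :
    ((gexact x ∧ gexact y) ∨ (¬ gexact y ∧ ∃ q : ℚ, (q : ℝ) = γmap x - γmap y)) →
      ((gexact x' ∧ gexact y') ∨ (¬ gexact y' ∧ ∃ q : ℚ, (q : ℝ) = γmap x' - γmap y')) := by
  rintro (⟨hex, hey⟩ | ⟨hny, q, hq⟩)
  · by_cases hey' : gexact y'
    · exact Or.inl ⟨hx hex, hey'⟩
    · obtain ⟨a, ha⟩ := exists_rat_eq_γmap_of_gexact hex
      obtain ⟨b, hb⟩ := exists_rat_eq_γmap_of_gexact hey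
      exact Or.inr ⟨hey', a - b, by push_cast; rw [ha, hb, heq]⟩
  · exact Or.inr ⟨mt hy hny, q, hq.trans heq⟩

theorem stmt_6_general (x y x' y' : Gamma) (hyx : y ≤ x) (hx : x ≤ x') (hy : y' ≤ y) :
    gsub x y ≤ gsub x' y' := by
  have hγx := γmap_mono hx
  have hγy := γmap_mono hy
  refine mk'_le_mk' (sub_nonneg.2 (γmap_mono hyx))
    (by linarith [γmap_le_one x', γmap_nonneg y']) (by linarith) fun heq => ?_
  have hxx : γmap x = γmap x' := by linarith
  have hyy : γmap y' = γmap y := by linarith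
  simpa using gsub_flag_imp (gexact_of_le_of_γmap_eq hx hxx)
    (gexact_of_le_of_γmap_eq hy hyy) heq

/-- the partial subtraction `∸` on `Γ` is monotone: if `y ≤ x`,
`x ≤ x'` and `y' ≤ y` (with `y' ≤ x'`), then `x ∸ y ≤ x' ∸ y'`. -/
theorem stmt_6 (x y x' y' : Gamma) (hyx : y ≤ x) (hx : x ≤ x') (hy : y' ≤ y)
    (hy'x' : y' ≤ x') :
    gsub x y ≤ gsub x' y' :=
  stmt_6_general x y x' y' hyx hx hy
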